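/- If the family θ satisfies the fixed-point property, then the value function is the optimal value of the single-agent control problem against the equilibrium mean-field flow: for every t ∈ {1,…,T}, z ∈ PMF X and x ∈ X, V_t(z,x) = sup over all Markov policies σ of J_t^{σ}(z,x), and this supremum is attained by the policy θ. -/

import Mathlib

open scoped BigOperators ENNReal

section MFG

variable {X A : Type*} [Fintype X] [Fintype A] [Nonempty X] [Nonempty A]

/-- McKean–Vlasov update: `phi τ z γ (y) = ∑ x, ∑ a, z x * γ x a * τ x a z y`. -/
noncomputable def phi (τ : X → A → PMF X → PMF X) (z : PMF X) (γ : X → PMF A) : PMF X :=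
  z.bind fun x => (γ x).bind fun a => τ x a z

/-- Backward-recursive value function with `V (T+1) = 0`. -/
noncomputable def V (τ : X → A → PMF X → PMF X) (R : X → A → PMF X → ℝ) (δ : ℝ)
    (T : ℕ) (θ : ℕ → PMF X → X → PMF A) (t : ℕ) (z : PMF X) (x : X) : ℝ :=
  if h : T < t then 0
  else
    ∑ a : A, ((θ t z x) a).toReal *
      (R x a z + δ * ∑ x' : X, ((τ x a z) x').toReal *
        V τ R δ T θ (t + 1) (phi τ z (θ t z)) x')
termination_by T + 1 - t
decreasing_by omega

/-- Action-value function `Q_t(z,x,a,γ)`. -/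
noncomputable def Q (τ : X → A → PMF X → PMF X) (R : X → A → PMF X → ℝ) (δ : ℝ)
    (T : ℕ) (θ : ℕ → PMF X → X → PMF A) (t : ℕ) (z : PMF X) (x : X) (a : A)
    (γ : X → PMF A) : ℝ :=
  R x a z + δ * ∑ x' : X, ((τ x a z) x').toReal * V τ R δ T θ (t + 1) (phi τ z γ) x'

/-- The fixed-point property of the equilibrium generating family `θ`. -/
def IsFixedPoint (τ : X → A → PMF X → PMF X) (R : X → A → PMF X → ℝ) (δ : ℝ)
    (T : ℕ) (θ : ℕ → PMF X → X → PMF A) : Prop :=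
  ∀ t, 1 ≤ t → t ≤ T → ∀ (z : PMF X) (x : X) (π : PMF A),
    ∑ a : A, ((θ t z x) a).toReal * Q τ R δ T θ t z x a (θ t z) ≥
      ∑ a : A, (π a).toReal * Q τ R δ T θ t z x a (θ t z)

/-- Mean-field flow generated by the policy `θ`, started from `z` at time `t`:
`flow τ θ t z n = z_{t+n}`. -/
noncomputable def flow (τ : X → A → PMF X → PMF X) (θ : ℕ → PMF X → X → PMF A)
    (t : ℕ) (z : PMF X) : ℕ → PMF X
  | 0 => z
  | n + 1 => phi τ (flow τ θ t z n) (θ (t + n) (flow τ θ t z n))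

/-- Individual state trajectory: `traj x xs 0 = x`, `traj x xs (i+1) = xs i`. -/
def traj {n : ℕ} (x : X) (xs : Fin n → X) : Fin (n + 1) → X := Fin.cases x xs

/-- Path-sum expected discounted return `J_t^σ(z,x)` of the Markov policy `σ`,
against the mean-field flow generated by `θ` started from `z` at time `t`. -/
noncomputable def J (τ : X → A → PMF X → PMF X) (R : X → A → PMF X → ℝ) (δ : ℝ)
    (T : ℕ) (θ σ : ℕ → PMF X → X → PMF A) (t : ℕ) (z : PMF X) (x : X) : ℝ :=
  ∑ as : Fin (T - t + 1) → A, ∑ xs : Fin (T - t) → X,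
    ((∏ k : Fin (T - t + 1),
        ((σ (t + (k : ℕ)) (flow τ θ t z (k : ℕ)) (traj x xs k)) (as k)).toReal) *
      (∏ k : Fin (T - t),
        ((τ (traj x xs k.castSucc) (as k.castSucc) (flow τ θ t z (k : ℕ)))
          (traj x xs k.succ)).toReal)) *
    (∑ k : Fin (T - t + 1),
      δ ^ (k : ℕ) * R (traj x xs k) (as k) (flow τ θ t z (k : ℕ)))

end MFG

/-!
Splitting off the first action and the first transition of the path sum `J` gives the Bellman
recursion `J^σ_t(z,x) = ∑ₐ σ(a) (R(x,a,z) + δ ∑_{x'} τ(x') J^σ_{t+1}(φ(z, θ_t z), x'))`, because the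
equilibrium flow from `z` at time `t` continues as the flow from `φ(z, θ_t z)` at time `t + 1`.
For `σ = θ` this is the recursion defining `V`, so `V = J^θ` by backward induction. For any `σ`,
backward induction and `δ ≥ 0` give `J^σ_t ≤ ∑ₐ σ(a) Q_t(z,x,a,θ_t z)`, which the fixed-point
property bounds by `V_t`.
-/

lemma PMF.sum_toReal_eq_one {α : Type*} [Fintype α] (p : PMF α) : ∑ a, (p a).toReal = 1 := by
  rw [← ENNReal.toReal_sum fun a _ => p.apply_ne_top a,
    ← tsum_fintype (L := SummationFilter.unconditional _), p.tsum_coe, ENNReal.toReal_one]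

lemma sum_fun_fin_succ {α : Type*} [Fintype α] {n : ℕ} (f : (Fin (n + 1) → α) → ℝ) :
    ∑ g : Fin (n + 1) → α, f g = ∑ a : α, ∑ g : Fin n → α, f (Fin.cons a g) := by
  rw [← (Fin.consEquiv fun _ => α).sum_comp f, Fintype.sum_prod_type]
  rfl

section MarkovDecisionProcess

variable {X A : Type*}

@[simp] lemma traj_zero {n : ℕ} (x : X) (xs : Fin n → X) : traj x xs 0 = x := rfl

lemma traj_cons {n : ℕ} (x x' : X) (xs : Fin n → X) :
    traj x (Fin.cons x' xs) = Fin.cons x (traj x' xs) := rfl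

variable (π : ℕ → X → PMF A) (κ : ℕ → X → A → PMF X)

noncomputable def pathWeight {n : ℕ} (x : X) (as : Fin (n + 1) → A) (xs : Fin n → X) : ℝ :=
  (∏ k : Fin (n + 1), (π k (traj x xs k) (as k)).toReal) *
    ∏ k : Fin n, (κ k (traj x xs k.castSucc) (as k.castSucc) (traj x xs k.succ)).toReal

lemma pathWeight_cons {n : ℕ} (x x' : X) (a : A) (as : Fin (n + 1) → A) (xs : Fin n → X) :
    pathWeight π κ x (Fin.cons a as) (Fin.cons x' xs) =
      (π 0 x a).toReal * (κ 0 x a x').toReal *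
        pathWeight (fun k => π (k + 1)) (fun k => κ (k + 1)) x' as xs := by
  simp only [pathWeight, Fin.prod_univ_succ (n := n + 1), Fin.prod_univ_succ (n := n), traj_cons,
    Fin.cons_zero, Fin.cons_succ, Fin.castSucc_zero, ← Fin.succ_castSucc, Fin.val_succ,
    Fin.val_zero, traj_zero]
  ring

variable [Fintype X] [Fintype A]

lemma sum_pathWeight_mul {n : ℕ} (x : X) (G : (Fin (n + 2) → A) → (Fin (n + 1) → X) → ℝ) :
    ∑ as, ∑ xs, pathWeight π κ x as xs * G as xs =
      ∑ a, ∑ x', (π 0 x a).toReal * (κ 0 x a x').toReal *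
        ∑ as, ∑ xs, pathWeight (fun k => π (k + 1)) (fun k => κ (k + 1)) x' as xs *
          G (Fin.cons a as) (Fin.cons x' xs) := by
  rw [sum_fun_fin_succ]
  refine Finset.sum_congr rfl fun a _ => ?_
  simp only [sum_fun_fin_succ (α := X), pathWeight_cons, Finset.mul_sum, mul_assoc]
  exact Finset.sum_comm

lemma sum_pathWeight (n : ℕ) (x : X) :
    ∑ as : Fin (n + 1) → A, ∑ xs : Fin n → X, pathWeight π κ x as xs = 1 := by
  induction n generalizing π κ x with
  | zero => simp [sum_fun_fin_succ, pathWeight, PMF.sum_toReal_eq_one]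
  | succ n ih =>
    simpa only [mul_one, ih, ← Finset.mul_sum, PMF.sum_toReal_eq_one] using
      sum_pathWeight_mul (n := n) π κ x fun _ _ => 1

variable (r : ℕ → X → A → ℝ) (δ : ℝ)

noncomputable def expectedReturn (n : ℕ) (x : X) : ℝ :=
  ∑ as : Fin (n + 1) → A, ∑ xs : Fin n → X,
    pathWeight π κ x as xs * ∑ k : Fin (n + 1), δ ^ (k : ℕ) * r k (traj x xs k) (as k)

lemma expectedReturn_zero (x : X) :
    expectedReturn π κ r δ 0 x = ∑ a, (π 0 x a).toReal * r 0 x a := by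
  simp [expectedReturn, sum_fun_fin_succ, pathWeight]

lemma expectedReturn_succ (n : ℕ) (x : X) :
    expectedReturn π κ r δ (n + 1) x =
      ∑ a, (π 0 x a).toReal * (r 0 x a + δ * ∑ x', (κ 0 x a x').toReal *
        expectedReturn (fun k => π (k + 1)) (fun k => κ (k + 1)) (fun k => r (k + 1)) δ n x') := by
  have reward_cons : ∀ a x' (as : Fin (n + 1) → A) (xs : Fin n → X),
      ∑ k : Fin (n + 2), δ ^ (k : ℕ) * r k (traj x (Fin.cons x' xs) k) (Fin.cons a as k) =
        r 0 x a + δ * ∑ k : Fin (n + 1), δ ^ (k : ℕ) * r (k + 1) (traj x' xs k) (as k) := by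
    intro a x' as xs
    simp only [Fin.sum_univ_succ (n := n + 1), traj_cons, Fin.cons_zero, Fin.cons_succ,
      Fin.val_zero, Fin.val_succ, pow_zero, one_mul, pow_succ', mul_assoc, Finset.mul_sum]
  rw [expectedReturn, sum_pathWeight_mul]
  simp only [reward_cons, mul_add, Finset.sum_add_distrib, ← Finset.sum_mul, mul_left_comm _ δ,
    ← Finset.mul_sum, sum_pathWeight, one_mul]
  simp only [PMF.sum_toReal_eq_one, mul_one, expectedReturn, Finset.mul_sum, mul_assoc]

end MarkovDecisionProcess

section MeanFieldGame

variable {X A : Type*}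

@[simp] lemma flow_zero (τ : X → A → PMF X → PMF X) (θ : ℕ → PMF X → X → PMF A) (t : ℕ)
    (z : PMF X) : flow τ θ t z 0 = z :=
  rfl

lemma flow_succ (τ : X → A → PMF X → PMF X) (θ : ℕ → PMF X → X → PMF A) (t : ℕ) (z : PMF X)
    (k : ℕ) : flow τ θ t z (k + 1) = flow τ θ (t + 1) (phi τ z (θ t z)) k := by
  induction k with
  | zero => rfl
  | succ k ih => rw [flow, ih, flow, show t + (k + 1) = t + 1 + k by omega]

variable [Fintype X] [Fintype A] {τ : X → A → PMF X → PMF X} {R : X → A → PMF X → ℝ} {δ : ℝ}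
  {T : ℕ} {θ : ℕ → PMF X → X → PMF A}

lemma J_eq_expectedReturn (σ : ℕ → PMF X → X → PMF A) (t : ℕ) (z : PMF X) (x : X) :
    J τ R δ T θ σ t z x =
      expectedReturn (fun k => σ (t + k) (flow τ θ t z k)) (fun k x a => τ x a (flow τ θ t z k))
        (fun k x a => R x a (flow τ θ t z k)) δ (T - t) x :=
  rfl

lemma J_horizon (σ : ℕ → PMF X → X → PMF A) (z : PMF X) (x : X) :
    J τ R δ T θ σ T z x = ∑ a, (σ T z x a).toReal * R x a z := by
  rw [J_eq_expectedReturn, Nat.sub_self, expectedReturn_zero]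
  rfl

lemma J_of_lt (σ : ℕ → PMF X → X → PMF A) {t : ℕ} (ht : t < T) (z : PMF X) (x : X) :
    J τ R δ T θ σ t z x = ∑ a, (σ t z x a).toReal * (R x a z + δ * ∑ x', (τ x a z x').toReal *
      J τ R δ T θ σ (t + 1) (phi τ z (θ t z)) x') := by
  rw [J_eq_expectedReturn, show T - t = T - (t + 1) + 1 by omega, expectedReturn_succ]
  simp only [J_eq_expectedReturn, flow_succ, flow_zero, Nat.add_zero, ← Nat.add_assoc,
    Nat.add_right_comm t _ 1]

lemma V_eq_sum_Q {t : ℕ} (ht : t ≤ T) (z : PMF X) (x : X) :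
    V τ R δ T θ t z x = ∑ a, (θ t z x a).toReal * Q τ R δ T θ t z x a (θ t z) := by
  rw [V, dif_neg (not_lt.2 ht)]
  rfl

lemma Q_horizon (z : PMF X) (x : X) (a : A) (γ : X → PMF A) :
    Q τ R δ T θ T z x a γ = R x a z := by
  simp [Q, V]

lemma J_self_eq_V {t : ℕ} (ht : t ≤ T) (z : PMF X) (x : X) :
    J τ R δ T θ θ t z x = V τ R δ T θ t z x := by
  induction ht using Nat.decreasingInduction generalizing z x with
  | self => simp only [J_horizon, V_eq_sum_Q le_rfl, Q_horizon]
  | of_succ t ht ih => simp only [J_of_lt θ ht, V_eq_sum_Q ht.le, Q, ih]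

lemma sum_mul_Q_le_V (hθ : IsFixedPoint τ R δ T θ) {t : ℕ} (ht1 : 1 ≤ t) (htT : t ≤ T)
    (z : PMF X) (x : X) (π : PMF A) :
    ∑ a, (π a).toReal * Q τ R δ T θ t z x a (θ t z) ≤ V τ R δ T θ t z x := by
  rw [V_eq_sum_Q htT]
  exact hθ t ht1 htT z x π

lemma J_le_V (hδ : 0 ≤ δ) (hθ : IsFixedPoint τ R δ T θ) (σ : ℕ → PMF X → X → PMF A) {t : ℕ}
    (ht1 : 1 ≤ t) (htT : t ≤ T) (z : PMF X) (x : X) :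
    J τ R δ T θ σ t z x ≤ V τ R δ T θ t z x := by
  induction htT using Nat.decreasingInduction generalizing z x with
  | self =>
    rw [J_horizon]
    simpa only [Q_horizon] using sum_mul_Q_le_V hθ ht1 le_rfl z x (σ T z x)
  | of_succ t ht ih =>
    calc J τ R δ T θ σ t z x
        ≤ ∑ a, (σ t z x a).toReal * Q τ R δ T θ t z x a (θ t z) := by
          simp only [J_of_lt σ ht, Q]
          gcongr with a _ x' _
          exact ih (by omega) _ _
      _ ≤ V τ R δ T θ t z x := sum_mul_Q_le_V hθ ht1 ht.le z x (σ t z x)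

end MeanFieldGame

section MFG

variable {X A : Type*} [Fintype X] [Fintype A] [Nonempty X] [Nonempty A]

theorem V_is_optimal_value_general
    (τ : X → A → PMF X → PMF X) (R : X → A → PMF X → ℝ) (δ : ℝ)
    (hδ0 : 0 < δ) (T : ℕ)
    (θ : ℕ → PMF X → X → PMF A) (hθ : IsFixedPoint τ R δ T θ)
    (t : ℕ) (ht1 : 1 ≤ t) (htT : t ≤ T) (z : PMF X) (x : X) :
    IsGreatest
      (Set.range fun σ : ℕ → PMF X → X → PMF A => J τ R δ T θ σ t z x)
      (V τ R δ T θ t z x) ∧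
    V τ R δ T θ t z x = J τ R δ T θ θ t z x := by
  have hV : J τ R δ T θ θ t z x = V τ R δ T θ t z x := J_self_eq_V htT z x
  refine ⟨⟨⟨θ, hV⟩, ?_⟩, hV.symm⟩
  rintro _ ⟨σ, rfl⟩
  exact J_le_V hδ0.le hθ σ ht1 htT z x

/-- the value function is the optimal value of the single-agent control
problem against the equilibrium mean-field flow, and the supremum is attained by `θ`. -/
theorem V_is_optimal_value
    (τ : X → A → PMF X → PMF X) (R : X → A → PMF X → ℝ) (δ : ℝ)
    (hδ0 : 0 < δ) (hδ1 : δ ≤ 1) (T : ℕ) (hT : 1 ≤ T)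
    (θ : ℕ → PMF X → X → PMF A) (hθ : IsFixedPoint τ R δ T θ)
    (t : ℕ) (ht1 : 1 ≤ t) (htT : t ≤ T) (z : PMF X) (x : X) :
    IsGreatest
      (Set.range fun σ : ℕ → PMF X → X → PMF A => J τ R δ T θ σ t z x)
      (V τ R δ T θ t z x) ∧
    V τ R δ T θ t z x = J τ R δ T θ θ t z x :=
  V_is_optimal_value_general τ R δ hδ0 T θ hθ t ht1 htT z x

end MFG
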